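/- arXiv:1610.05270 — 5 statements merged into one kernel-verified Lean document; each statement's English description precedes it below -/
import Mathlib

section
/- The free distributive lattice on a finite set is finite. -/
/-- Lattice terms (polynomials built from `⊓` and `⊔`) over a set `α` of generators. -/
inductive LatTerm (α : Type) : Type
  | var : α → LatTerm α
  | inf : LatTerm α → LatTerm α → LatTerm α
  | sup : LatTerm α → LatTerm α → LatTerm α

/-- Evaluation of a lattice term in a lattice `D` at a valuation `d`. -/
def LatTerm.eval {D : Type} [Lattice D] {α : Type} (d : α → D) : LatTerm α → D
  | .var i => d i
  | .inf s t => s.eval d ⊓ t.eval d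
  | .sup s t => s.eval d ⊔ t.eval d

/-- Two lattice terms are identified iff they are equal in every distributive lattice. -/
instance latSetoid (α : Type) : Setoid (LatTerm α) where
  r s t := ∀ (D : Type) [DistribLattice D] (d : α → D), s.eval d = t.eval d
  iseqv :=
    ⟨fun _ _ _ _ => rfl, fun h D _ d => (h D d).symm,
      fun h₁ h₂ D _ d => (h₁ D d).trans (h₂ D d)⟩

/-- The free distributive lattice on the set `α` of generators. -/
def FreeDL (α : Type) : Type := Quotient (latSetoid α)

/-! Distributivity rewrites every lattice term as a join of meets of generators, so its value in
any distributive lattice is determined by a finite set of finite subsets of the generators.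
Hence `FreeDL F` injects into `Finset (Finset F)`. -/

namespace LatTerm

variable {α : Type}

theorem map_eval {D E : Type} [Lattice D] [Lattice E] (f : LatticeHom D E) (d : α → D)
    (t : LatTerm α) : f (t.eval d) = t.eval (f ∘ d) := by
  induction t with
  | var i => rfl
  | inf s t hs ht => simp only [eval, map_inf, hs, ht]
  | sup s t hs ht => simp only [eval, map_sup, hs, ht]

variable [DecidableEq α]

def dnf : LatTerm α → Finset (Finset α)
  | .var i => {{i}}
  | .inf s t => (s.dnf ×ˢ t.dnf).image fun p => p.1 ∪ p.2
  | .sup s t => s.dnf ∪ t.dnf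

theorem eval_eq_sup_dnf {D : Type} [DistribLattice D] [BoundedOrder D] (d : α → D)
    (t : LatTerm α) : t.eval d = t.dnf.sup fun S => S.inf d := by
  induction t with
  | var i => simp [eval, dnf]
  | inf s t hs ht =>
    rw [eval, hs, ht, Finset.sup_inf_sup, dnf, Finset.sup_image]
    simp only [Function.comp_def, Finset.inf_union]
  | sup s t hs ht => rw [eval, hs, ht, dnf, Finset.sup_union]

/-- Embedding a distributive lattice into a bounded one makes `eval_eq_sup_dnf` available. -/
theorem equiv_of_dnf_eq {s t : LatTerm α} (h : s.dnf = t.dnf) : s ≈ t := by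
  intro D _ d
  let ι : LatticeHom D (WithTop (WithBot D)) :=
    { toFun := fun a => ((a : WithBot D) : WithTop (WithBot D))
      map_sup' := fun a b => by simp only [WithBot.coe_sup, WithTop.coe_sup]
      map_inf' := fun a b => by simp only [WithBot.coe_inf, WithTop.coe_inf] }
  have hι : Function.Injective ι := WithTop.coe_injective.comp WithBot.coe_injective
  apply hι
  rw [map_eval, map_eval, eval_eq_sup_dnf, eval_eq_sup_dnf, h]

end LatTerm

/-- The free distributive lattice on a finite set is finite. -/
theorem freeDL_finite (F : Type) [Finite F] : Finite (FreeDL F) := by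
  classical
  refine Finite.of_injective (fun x : FreeDL F => x.out.dnf) fun x y h => ?_
  rw [← Quotient.out_eq x, ← Quotient.out_eq y]
  exact Quotient.sound (LatTerm.equiv_of_dnf_eq h)
end

section
/- The free De Morgan algebra on n generators is, as a distributive lattice, isomorphic to the free distributive lattice on 2n generators. -/
/-- A De Morgan algebra: a bounded distributive lattice with an involution satisfying
De Morgan's law. -/
class DeMorganAlg (α : Type) extends DistribLattice α, BoundedOrder α where
  dneg : α → α
  dneg_dneg : ∀ a, dneg (dneg a) = a
  dneg_inf : ∀ a b, dneg (a ⊓ b) = dneg a ⊔ dneg b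

/-- De Morgan terms in `n` variables. -/
inductive DMTerm (n : ℕ) : Type
  | var : Fin n → DMTerm n
  | bot : DMTerm n
  | top : DMTerm n
  | neg : DMTerm n → DMTerm n
  | inf : DMTerm n → DMTerm n → DMTerm n
  | sup : DMTerm n → DMTerm n → DMTerm n

/-- Evaluation of a De Morgan term in a De Morgan algebra. -/
def DMTerm.eval {D : Type} [DeMorganAlg D] {n : ℕ} (d : Fin n → D) : DMTerm n → D
  | .var i => d i
  | .bot => ⊥
  | .top => ⊤
  | .neg t => DeMorganAlg.dneg (t.eval d)
  | .inf s t => s.eval d ⊓ t.eval d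
  | .sup s t => s.eval d ⊔ t.eval d

/-- De Morgan terms are identified iff equal in every De Morgan algebra. -/
instance dmSetoid (n : ℕ) : Setoid (DMTerm n) where
  r s t := ∀ (D : Type) [DeMorganAlg D] (d : Fin n → D), s.eval d = t.eval d
  iseqv :=
    ⟨fun _ _ _ _ => rfl, fun h D _ d => (h D d).symm,
      fun h₁ h₂ D _ d => (h₁ D d).trans (h₂ D d)⟩

/-- The free De Morgan algebra on `n` generators. -/
def FreeDM (n : ℕ) : Type := Quotient (dmSetoid n)

def FreeDM.sup {n : ℕ} : FreeDM n → FreeDM n → FreeDM n :=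
  Quotient.map₂ DMTerm.sup (fun _ _ h₁ _ _ h₂ D _ d => by
    show DMTerm.eval d _ = DMTerm.eval d _
    simp only [DMTerm.eval, h₁ D d, h₂ D d])

def FreeDM.inf {n : ℕ} : FreeDM n → FreeDM n → FreeDM n :=
  Quotient.map₂ DMTerm.inf (fun _ _ h₁ _ _ h₂ D _ d => by
    show DMTerm.eval d _ = DMTerm.eval d _
    simp only [DMTerm.eval, h₁ D d, h₂ D d])

/-- Bounded lattice terms in `m` variables. -/
inductive BLatTerm (m : ℕ) : Type
  | var : Fin m → BLatTerm m
  | bot : BLatTerm m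
  | top : BLatTerm m
  | inf : BLatTerm m → BLatTerm m → BLatTerm m
  | sup : BLatTerm m → BLatTerm m → BLatTerm m

/-- Evaluation of a bounded lattice term. -/
def BLatTerm.eval {D : Type} [Lattice D] [BoundedOrder D] {m : ℕ} (d : Fin m → D) :
    BLatTerm m → D
  | .var i => d i
  | .bot => ⊥
  | .top => ⊤
  | .inf s t => s.eval d ⊓ t.eval d
  | .sup s t => s.eval d ⊔ t.eval d

/-- Bounded lattice terms are identified iff equal in every bounded distributive lattice. -/
instance bLatSetoid (m : ℕ) : Setoid (BLatTerm m) where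
  r s t := ∀ (D : Type) [DistribLattice D] [BoundedOrder D] (d : Fin m → D),
    s.eval d = t.eval d
  iseqv :=
    ⟨fun _ _ _ _ _ => rfl, fun h D _ _ d => (h D d).symm,
      fun h₁ h₂ D _ _ d => (h₁ D d).trans (h₂ D d)⟩

/-- The free bounded distributive lattice on `m` generators. -/
def FreeBDL (m : ℕ) : Type := Quotient (bLatSetoid m)

def FreeBDL.sup {m : ℕ} : FreeBDL m → FreeBDL m → FreeBDL m :=
  Quotient.map₂ BLatTerm.sup (fun _ _ h₁ _ _ h₂ D _ _ d => by
    show BLatTerm.eval d _ = BLatTerm.eval d _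
    simp only [BLatTerm.eval, h₁ D d, h₂ D d])

def FreeBDL.inf {m : ℕ} : FreeBDL m → FreeBDL m → FreeBDL m :=
  Quotient.map₂ BLatTerm.inf (fun _ _ h₁ _ _ h₂ D _ _ d => by
    show BLatTerm.eval d _ = BLatTerm.eval d _
    simp only [BLatTerm.eval, h₁ D d, h₂ D d])

/-!
Every De Morgan term `t` has a negation normal form: a lattice term in the literals
`xᵢ, ¬xᵢ`, computed together with the normal form of `¬t` by pushing negations to the
variables. That this is compatible with the identification of terms follows by evaluating in
`D × Dᵒᵈ`, which for a bounded distributive lattice `D` is a De Morgan algebra under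
`(a, b) ↦ (b, a)`: with `xᵢ ↦ (dᵢ, d_{n+i})` a term evaluates to the pair of its two normal
forms. Conversely, substituting `¬xᵢ` for the variable `x_{n+i}` respects lattice identities,
since every De Morgan algebra is a bounded distributive lattice. Normalising after
substituting is the identity on lattice terms, and a normal form evaluates like its term in
every De Morgan algebra, so the two maps are mutually inverse.
-/

namespace DeMorganAlg

variable {D : Type} [DeMorganAlg D]

theorem dneg_injective : Function.Injective (dneg (α := D)) := fun a b h => by
  rw [← dneg_dneg a, h, dneg_dneg]

theorem dneg_sup (a b : D) : dneg (a ⊔ b) = dneg a ⊓ dneg b :=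
  dneg_injective (by rw [dneg_inf, dneg_dneg, dneg_dneg, dneg_dneg])

theorem dneg_bot : dneg (⊥ : D) = ⊤ :=
  calc dneg (⊥ : D) = dneg (⊥ ⊓ dneg ⊤) := by rw [bot_inf_eq]
    _ = ⊤ := by rw [dneg_inf, dneg_dneg, sup_top_eq]

theorem dneg_top : dneg (⊤ : D) = ⊥ := by
  rw [← dneg_bot, dneg_dneg]

instance prodOrderDual (L : Type) [DistribLattice L] [BoundedOrder L] :
    DeMorganAlg (L × Lᵒᵈ) where
  dneg p := (OrderDual.ofDual p.2, OrderDual.toDual p.1)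
  dneg_dneg _ := rfl
  dneg_inf _ _ := rfl

end DeMorganAlg

open DeMorganAlg

namespace DMTerm

variable {n : ℕ}

/-- `t.nnf.1` is the negation normal form of `t` and `t.nnf.2` that of `¬t`; the variable
`Fin.natAdd n i` stands for `¬xᵢ`. -/
def nnf : DMTerm n → BLatTerm (n + n) × BLatTerm (n + n)
  | .var i => (.var (Fin.castAdd n i), .var (Fin.natAdd n i))
  | .bot => (.bot, .top)
  | .top => (.top, .bot)
  | .neg t => t.nnf.swap
  | .inf s t => (.inf s.nnf.1 t.nnf.1, .sup s.nnf.2 t.nnf.2)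
  | .sup s t => (.sup s.nnf.1 t.nnf.1, .inf s.nnf.2 t.nnf.2)

theorem eval_prodOrderDual {L : Type} [DistribLattice L] [BoundedOrder L]
    (d : Fin (n + n) → L) (t : DMTerm n) :
    t.eval (fun i => (d (Fin.castAdd n i), OrderDual.toDual (d (Fin.natAdd n i))))
      = (t.nnf.1.eval d, OrderDual.toDual (t.nnf.2.eval d)) := by
  induction t with
  | var i => rfl
  | bot => rfl
  | top => rfl
  | neg t ih => simp only [eval, ih]; rfl
  | inf s t ihs iht => simp only [eval, ihs, iht]; rfl
  | sup s t ihs iht => simp only [eval, ihs, iht]; rfl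

theorem fst_nnf_congr {s t : DMTerm n} (h : s ≈ t) : s.nnf.1 ≈ t.nnf.1 := fun L _ _ d =>
  congrArg Prod.fst <| by
    simpa only [eval_prodOrderDual] using
      h (L × Lᵒᵈ) fun i => (d (Fin.castAdd n i), OrderDual.toDual (d (Fin.natAdd n i)))

end DMTerm

namespace BLatTerm

variable {n : ℕ}

def toDMTerm : BLatTerm (n + n) → DMTerm n
  | .var i => Fin.addCases (fun j => .var j) (fun j => .neg (.var j)) i
  | .bot => .bot
  | .top => .top
  | .inf s t => .inf s.toDMTerm t.toDMTerm
  | .sup s t => .sup s.toDMTerm t.toDMTerm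

theorem eval_toDMTerm {D : Type} [DeMorganAlg D] (d : Fin n → D) (u : BLatTerm (n + n)) :
    u.toDMTerm.eval d = u.eval (Fin.addCases d fun i => dneg (d i)) := by
  induction u with
  | var i =>
    refine Fin.addCases (fun j => ?_) (fun j => ?_) i <;>
      simp only [toDMTerm, eval, DMTerm.eval, Fin.addCases_left, Fin.addCases_right]
  | bot => rfl
  | top => rfl
  | inf s t ihs iht => simp only [toDMTerm, DMTerm.eval, eval, ihs, iht]
  | sup s t ihs iht => simp only [toDMTerm, DMTerm.eval, eval, ihs, iht]

theorem toDMTerm_congr {s t : BLatTerm (n + n)} (h : s ≈ t) : s.toDMTerm ≈ t.toDMTerm :=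
  fun D _ d => by rw [eval_toDMTerm, eval_toDMTerm]; exact h D _

theorem fst_nnf_toDMTerm (u : BLatTerm (n + n)) : u.toDMTerm.nnf.1 = u := by
  induction u with
  | var i =>
    refine Fin.addCases (fun j => ?_) (fun j => ?_) i <;>
      simp only [toDMTerm, DMTerm.nnf, Fin.addCases_left, Fin.addCases_right, Prod.fst_swap]
  | bot => rfl
  | top => rfl
  | inf s t ihs iht => simp only [toDMTerm, DMTerm.nnf, ihs, iht]
  | sup s t ihs iht => simp only [toDMTerm, DMTerm.nnf, ihs, iht]

end BLatTerm

namespace DMTerm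

variable {n : ℕ}

theorem eval_toDMTerm_nnf {D : Type} [DeMorganAlg D] (d : Fin n → D) (t : DMTerm n) :
    t.nnf.1.toDMTerm.eval d = t.eval d ∧ t.nnf.2.toDMTerm.eval d = dneg (t.eval d) := by
  induction t with
  | var i =>
    constructor <;>
      simp only [nnf, BLatTerm.toDMTerm, eval, Fin.addCases_left, Fin.addCases_right]
  | bot => exact ⟨rfl, dneg_bot.symm⟩
  | top => exact ⟨rfl, dneg_top.symm⟩
  | neg t ih => exact ⟨ih.2, by rw [eval, dneg_dneg]; exact ih.1⟩
  | inf s t ihs iht =>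
    exact ⟨by simp only [nnf, BLatTerm.toDMTerm, eval, ihs.1, iht.1],
      by simp only [nnf, BLatTerm.toDMTerm, eval, ihs.2, iht.2, dneg_inf]⟩
  | sup s t ihs iht =>
    exact ⟨by simp only [nnf, BLatTerm.toDMTerm, eval, ihs.1, iht.1],
      by simp only [nnf, BLatTerm.toDMTerm, eval, ihs.2, iht.2, dneg_sup]⟩

theorem toDMTerm_fst_nnf_equiv (t : DMTerm n) : t.nnf.1.toDMTerm ≈ t :=
  fun _ _ d => (eval_toDMTerm_nnf d t).1

end DMTerm

def FreeDM.equivFreeBDL (n : ℕ) : FreeDM n ≃ FreeBDL (n + n) where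
  toFun := Quotient.map (fun t => t.nnf.1) fun _ _ => DMTerm.fst_nnf_congr
  invFun := Quotient.map BLatTerm.toDMTerm fun _ _ => BLatTerm.toDMTerm_congr
  left_inv := Quotient.ind fun t => Quotient.sound (DMTerm.toDMTerm_fst_nnf_equiv t)
  right_inv := Quotient.ind fun u => congrArg Quotient.mk'' (BLatTerm.fst_nnf_toDMTerm u)

/-- The free De Morgan algebra on `n` generators is, as a bounded distributive lattice,
isomorphic to the free bounded distributive lattice on `2n` generators, the generators
`x₁, …, xₙ, ¬x₁, …, ¬xₙ`. -/
theorem freeDM_iso_freeBDL (n : ℕ) :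
    ∃ e : FreeDM n ≃ FreeBDL (n + n),
      (∀ x y, e (FreeDM.sup x y) = FreeBDL.sup (e x) (e y)) ∧
      (∀ x y, e (FreeDM.inf x y) = FreeBDL.inf (e x) (e y)) ∧
      e ⟦DMTerm.bot⟧ = ⟦BLatTerm.bot⟧ ∧
      e ⟦DMTerm.top⟧ = ⟦BLatTerm.top⟧ ∧
      (∀ i : Fin n, e ⟦DMTerm.var i⟧ = ⟦BLatTerm.var (Fin.castAdd n i)⟧) ∧
      (∀ i : Fin n, e ⟦DMTerm.neg (DMTerm.var i)⟧ = ⟦BLatTerm.var (Fin.natAdd n i)⟧) :=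
  ⟨FreeDM.equivFreeBDL n, Quotient.ind₂ fun _ _ => rfl, Quotient.ind₂ fun _ _ => rfl,
    rfl, rfl, fun _ => rfl, fun _ => rfl⟩
end

section
/- Flat distributive lattices have the disjunction property: if a ∨ b = 1 then a = 1 or b = 1. Dually, if a ∧ b = 0 then a = 0 or b = 0. -/
/-- Substitution of terms for the variables of a term. -/
def BLatTerm.subst {m k : ℕ} (γ : Fin m → BLatTerm k) : BLatTerm m → BLatTerm k
  | .var i => γ i
  | .bot => .bot
  | .top => .top
  | .inf s t => .inf (s.subst γ) (t.subst γ)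
  | .sup s t => .sup (s.subst γ) (t.subst γ)

/-- Equality of bounded lattice terms in the free bounded distributive lattice, i.e. equality
in every bounded distributive lattice. -/
def BTermEq {k : ℕ} (s t : BLatTerm k) : Prop :=
  ∀ (D : Type) [DistribLattice D] [BoundedOrder D] (d : Fin k → D), s.eval d = t.eval d

/-- A bounded distributive lattice `D` is *flat* (as a model of the Lawvere theory of bounded
distributive lattices) if every equation `α(d) = β(d)` between tuples of lattice polynomials
applied to a tuple `d` of elements of `D` factors as `α ∘ γ = β ∘ γ` (equality of lattice
polynomials, i.e. in the free distributive lattice) with `γ(d') = d` for some tuple `d'`. -/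
def IsFlat (D : Type) [DistribLattice D] [BoundedOrder D] : Prop :=
  ∀ (n m : ℕ) (α β : Fin n → BLatTerm m) (d : Fin m → D),
    (∀ i, (α i).eval d = (β i).eval d) →
    ∃ (k : ℕ) (γ : Fin m → BLatTerm k),
      (∀ i, BTermEq ((α i).subst γ) ((β i).subst γ)) ∧
      ∃ d' : Fin k → D, ∀ j, (γ j).eval d' = d j

namespace BLatTerm

variable {D : Type} [Lattice D] [BoundedOrder D] {m : ℕ}

theorem eval_eq_top_of_eval_false {s : BLatTerm m} (hs : s.eval (fun _ => false) = true)
    (d : Fin m → D) : s.eval d = ⊤ := by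
  induction s with
  | var i => exact Bool.noConfusion hs
  | bot => exact Bool.noConfusion hs
  | top => rfl
  | inf s t ihs iht =>
    obtain ⟨hs, ht⟩ := Bool.and_eq_true_iff.mp hs
    simp only [eval, ihs hs, iht ht, inf_idem]
  | sup s t ihs iht =>
    rcases Bool.or_eq_true_iff.mp hs with hs | ht
    · simp only [eval, ihs hs, top_sup_eq]
    · simp only [eval, iht ht, sup_top_eq]

theorem eval_eq_bot_of_eval_true {s : BLatTerm m} (hs : s.eval (fun _ => true) = false)
    (d : Fin m → D) : s.eval d = ⊥ := by
  induction s with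
  | var i => exact Bool.noConfusion hs
  | bot => rfl
  | top => exact Bool.noConfusion hs
  | inf s t ihs iht =>
    rcases Bool.and_eq_false_iff.mp hs with hs | ht
    · simp only [eval, ihs hs, bot_inf_eq]
    · simp only [eval, iht ht, inf_bot_eq]
  | sup s t ihs iht =>
    obtain ⟨hs, ht⟩ := Bool.or_eq_false_iff.mp hs
    simp only [eval, ihs hs, iht ht, sup_idem]

end BLatTerm

namespace IsFlat

open BLatTerm

variable {D : Type} [DistribLattice D] [BoundedOrder D]

theorem exists_lift_of_eval_eq (hD : IsFlat D) (t u : BLatTerm 2) {a b : D}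
    (h : t.eval ![a, b] = u.eval ![a, b]) :
    ∃ (k : ℕ) (γ : Fin 2 → BLatTerm k), BTermEq (t.subst γ) (u.subst γ) ∧
      ∃ d' : Fin k → D, (γ 0).eval d' = a ∧ (γ 1).eval d' = b := by
  obtain ⟨k, γ, hγ, d', hd'⟩ := hD 1 2 ![t] ![u] ![a, b] (Fin.forall_fin_one.mpr h)
  exact ⟨k, γ, hγ 0, d', hd' 0, hd' 1⟩

/-- The lift `γ` of `(a, b)` satisfies `γ₀ ⊔ γ₁ = ⊤` identically, so already in `Bool` at the
all-false valuation; there one of the `γᵢ` is true, which forces it to be `⊤` everywhere. -/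
theorem eq_top_or_eq_top_of_sup_eq_top (hD : IsFlat D) {a b : D} (hab : a ⊔ b = ⊤) :
    a = ⊤ ∨ b = ⊤ := by
  obtain ⟨k, γ, hγ, d', rfl, rfl⟩ := hD.exists_lift_of_eval_eq (.sup (.var 0) (.var 1)) .top hab
  have hγ_bool : (γ 0).eval (fun _ => false) ⊔ (γ 1).eval (fun _ => false) = ⊤ := by
    simpa only [subst, eval] using hγ Bool (fun _ => false)
  rcases Bool.or_eq_true_iff.mp hγ_bool with h | h
  · exact .inl (eval_eq_top_of_eval_false h d')
  · exact .inr (eval_eq_top_of_eval_false h d')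

theorem eq_bot_or_eq_bot_of_inf_eq_bot (hD : IsFlat D) {a b : D} (hab : a ⊓ b = ⊥) :
    a = ⊥ ∨ b = ⊥ := by
  obtain ⟨k, γ, hγ, d', rfl, rfl⟩ := hD.exists_lift_of_eval_eq (.inf (.var 0) (.var 1)) .bot hab
  have hγ_bool : (γ 0).eval (fun _ => true) ⊓ (γ 1).eval (fun _ => true) = ⊥ := by
    simpa only [subst, eval] using hγ Bool (fun _ => true)
  rcases Bool.and_eq_false_iff.mp hγ_bool with h | h
  · exact .inl (eval_eq_bot_of_eval_true h d')
  · exact .inr (eval_eq_bot_of_eval_true h d')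

end IsFlat

/-- Flat bounded distributive lattices have the disjunction property, and dually:
if `a ⊔ b = ⊤` then `a = ⊤` or `b = ⊤`; if `a ⊓ b = ⊥` then `a = ⊥` or `b = ⊥`. -/
theorem flat_disjunction_property (D : Type) [DistribLattice D] [BoundedOrder D]
    (hD : IsFlat D) :
    (∀ a b : D, a ⊔ b = ⊤ → a = ⊤ ∨ b = ⊤) ∧
    (∀ a b : D, a ⊓ b = ⊥ → a = ⊥ ∨ b = ⊥) :=
  ⟨fun _ _ => hD.eq_top_or_eq_top_of_sup_eq_top, fun _ _ => hD.eq_bot_or_eq_bot_of_inf_eq_bot⟩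
end

section
/- Every linear order with distinct top and bottom elements, regarded as a bounded distributive lattice via min and max, is a flat distributive lattice. -/
/-- A clamped variable term. -/
def varT (k n : ℕ) : BLatTerm k := if h : n < k then .var ⟨n, h⟩ else .top

/-- Chain terms `x₀`, `x₀ ⊔ x₁`, … -/
def chTerm (k : ℕ) : ℕ → BLatTerm k
  | 0 => varT k 0
  | n + 1 => .sup (chTerm k n) (varT k (n + 1))

theorem BLatTerm.eval_subst {D : Type} [Lattice D] [BoundedOrder D] {m k : ℕ}
    (γ : Fin m → BLatTerm k) (t : BLatTerm m) (e : Fin k → D) :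
    (t.subst γ).eval e = t.eval (fun j => (γ j).eval e) := by
  induction t <;> simp [BLatTerm.subst, BLatTerm.eval, *]

theorem chTerm_eval_mono {X : Type} [Lattice X] [BoundedOrder X] {k : ℕ} (e : Fin k → X) :
    Monotone (fun n => (chTerm k n).eval e) := by
  apply monotone_nat_of_le_succ
  intro n
  exact le_sup_left

theorem chTerm_eval_of_monotone {X : Type} [Lattice X] [BoundedOrder X] {k : ℕ}
    (v : Fin k → X) (hv : Monotone v) :
    ∀ (n : ℕ) (hn : n < k), (chTerm k n).eval v = v ⟨n, hn⟩ := by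
  intro n
  induction n with
  | zero => intro hn; simp [chTerm, varT, hn, BLatTerm.eval]
  | succ n ih =>
      intro hn
      have hn' : n < k := Nat.lt_of_succ_lt hn
      simp only [chTerm, BLatTerm.eval, ih hn', varT, dif_pos hn]
      exact sup_eq_right.2 (hv (by simp [Fin.le_def]))

/-- Monotone maps from a linear order preserving `⊥` and `⊤` commute with term evaluation. -/
theorem eval_comp_monotone {D D' : Type} [LinearOrder D] [BoundedOrder D]
    [Lattice D'] [BoundedOrder D'] (f : D → D') (hf : Monotone f)
    (hbot : f ⊥ = ⊥) (htop : f ⊤ = ⊤) {m : ℕ} (t : BLatTerm m) (d : Fin m → D) :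
    f (t.eval d) = t.eval (f ∘ d) := by
  induction t with
  | var i => rfl
  | bot => exact hbot
  | top => exact htop
  | inf s t hs ht =>
      simp only [BLatTerm.eval]
      rcases le_total (s.eval d) (t.eval d) with hle | hle
      · rw [inf_eq_left.2 hle, ← hs, ← ht, inf_eq_left.2 (hf hle)]
      · rw [inf_eq_right.2 hle, ← hs, ← ht, inf_eq_right.2 (hf hle)]
  | sup s t hs ht =>
      simp only [BLatTerm.eval]
      rcases le_total (s.eval d) (t.eval d) with hle | hle
      · rw [sup_eq_right.2 hle, ← hs, ← ht, sup_eq_right.2 (hf hle)]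
      · rw [sup_eq_left.2 hle, ← hs, ← ht, sup_eq_left.2 (hf hle)]

/-- Every (decidable) linear order with distinct top and bottom, regarded as a bounded
distributive lattice via `min` and `max`, is a flat distributive lattice. -/
theorem linearOrder_isFlat (D : Type) [LinearOrder D] [BoundedOrder D]
    (h : (⊥ : D) < ⊤) : IsFlat D := by
  intro n m α β d hαβ
  classical
  set S : Finset D := (Finset.univ.image d).filter (fun x => ⊥ < x ∧ x < ⊤) with hS
  set l : List D := S.sort (· ≤ ·) with hl
  set k : ℕ := l.length with hk
  have hsortlt : l.Pairwise (· < ·) := (Finset.sortedLT_sort S).pairwise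
  set d' : Fin k → D := fun i => l.get i with hd'
  have hd'strict : StrictMono d' := hsortlt.sortedLT.strictMono_get
  have hd'mono : Monotone d' := hd'strict.monotone
  have hmem : ∀ x, x ∈ l ↔ x ∈ S := fun x => Finset.mem_sort _
  have hd'S : ∀ i, d' i ∈ S := fun i => (hmem _).1 (l.get_mem _)
  -- the substitution
  set γ : Fin m → BLatTerm k := fun j =>
    if d j = ⊥ then .bot else if d j = ⊤ then .top
    else chTerm k (List.idxOf (d j) l) with hγ
  have hdmem : ∀ j, d j ≠ ⊥ → d j ≠ ⊤ → d j ∈ l := by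
    intro j hb ht
    rw [hmem, hS, Finset.mem_filter]
    refine ⟨Finset.mem_image_of_mem d (Finset.mem_univ j), ?_, ?_⟩
    · exact bot_lt_iff_ne_bot.2 hb
    · exact lt_top_iff_ne_top.2 ht
  refine ⟨k, γ, ?_, ?_⟩
  · -- the equations hold in every bounded distributive lattice
    intro i D' _ _ e
    -- the target chain
    set E : ℕ → D' := fun n => (chTerm k n).eval e with hE
    have hEmono : Monotone E := chTerm_eval_mono e
    -- the monotone transport map
    set f : D → D' := fun x => if x = ⊤ then ⊤
      else (Finset.univ.filter (fun i : Fin k => d' i ≤ x)).sup (fun i => E i.val) with hf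
    have hfmono : Monotone f := by
      intro x y hxy
      by_cases hy : y = ⊤
      · simp [hf, hy]
      · have hx : x ≠ ⊤ := fun hx => hy (top_le_iff.1 (hx ▸ hxy))
        simp only [hf, if_neg hx, if_neg hy]
        apply Finset.sup_mono
        intro i hi
        simp only [Finset.mem_filter, Finset.mem_univ, true_and] at hi ⊢
        exact hi.trans hxy
    have hfbot : f ⊥ = ⊥ := by
      have : (Finset.univ.filter (fun i : Fin k => d' i ≤ (⊥ : D))) = ∅ := by
        apply Finset.filter_eq_empty_iff.2
        intro i _
        have := (Finset.mem_filter.1 (hd'S i)).2.1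
        exact fun hle => absurd (le_bot_iff.1 hle) (ne_of_gt this)
      show (if (⊥ : D) = ⊤ then (⊤ : D') else
        (Finset.univ.filter (fun i : Fin k => d' i ≤ (⊥ : D))).sup (fun i => E i.val)) = ⊥
      rw [if_neg h.ne, this, Finset.sup_empty]
    have hftop : f ⊤ = ⊤ := by simp [hf]
    have hfd : ∀ j, (γ j).eval e = f (d j) := by
      intro j
      by_cases hb : d j = ⊥
      · rw [hb, hfbot]; simp [hγ, hb, BLatTerm.eval]
      by_cases ht : d j = ⊤
      · rw [ht, hftop]; simp [hγ, hb, ht, h.ne', BLatTerm.eval]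
      have hmem' := hdmem j hb ht
      have hidx : List.idxOf (d j) l < k := List.idxOf_lt_length_iff.2 hmem'
      set i0 : Fin k := ⟨List.idxOf (d j) l, hidx⟩ with hi0
      have hget : d' i0 = d j := List.getElem_idxOf hidx
      have : f (d j) = E i0.val := by
        simp only [hf, if_neg ht]
        apply le_antisymm
        · apply Finset.sup_le
          intro i hi
          have hle : d' i ≤ d' i0 := by
            rw [hget]; exact (Finset.mem_filter.1 hi).2
          exact hEmono (hd'strict.le_iff_le.1 hle)
        · exact Finset.le_sup (f := fun i : Fin k => E i.val) (b := i0)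
            (Finset.mem_filter.2 ⟨Finset.mem_univ _, le_of_eq hget⟩)
      rw [this, hγ]
      simp [hb, ht, hi0, hE]
    have key : ∀ t : BLatTerm m, (t.subst γ).eval e = t.eval (f ∘ d) := by
      intro t
      rw [BLatTerm.eval_subst]
      congr 1
      funext j
      exact hfd j
    rw [key, key, ← eval_comp_monotone f hfmono hfbot hftop,
      ← eval_comp_monotone f hfmono hfbot hftop, hαβ i]
  · -- γ evaluated at d' recovers d
    refine ⟨d', ?_⟩
    intro j
    by_cases hb : d j = ⊥
    · simp [hγ, hb, BLatTerm.eval]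
    by_cases ht : d j = ⊤
    · simp [hγ, hb, ht, h.ne', BLatTerm.eval]
    have hmem' := hdmem j hb ht
    have hidx : List.idxOf (d j) l < k := List.idxOf_lt_length_iff.2 hmem'
    have := chTerm_eval_of_monotone d' hd'mono (List.idxOf (d j) l) hidx
    simp only [hγ, if_neg hb, if_neg ht]
    rw [this]
    exact List.getElem_idxOf hidx
end

section
/- The real unit interval [0,1] with min, max, 0, 1 is a flat distributive lattice; in particular it satisfies the disjunction property: max(a,b) = 1 implies a = 1 or b = 1 (classically). -/
noncomputable instance : BoundedOrder unitInterval where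
  top := 1
  le_top x := x.2.2
  bot := 0
  bot_le x := x.2.1

namespace BLatTerm

variable {D : Type} [Lattice D] [BoundedOrder D] {m : ℕ}

lemma eval_subst_s14 {k : ℕ} (γ : Fin m → BLatTerm k) (t : BLatTerm m) (e : Fin k → D) :
    (t.subst γ).eval e = t.eval fun j => (γ j).eval e := by
  induction t <;> simp only [subst, eval, *]

def listSup (L : List (Fin m)) : BLatTerm m :=
  L.foldr (fun l t => .sup (.var l) t) .bot

lemma eval_listSup (L : List (Fin m)) (e : Fin m → D) :
    (listSup L).eval e = L.toFinset.sup e := by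
  induction L with
  | nil => rfl
  | cons l L ih =>
    rw [List.toFinset_cons, Finset.sup_insert, ← ih]
    rfl

lemma eval_comp_of_monotone {L : Type} [LinearOrder L] [BoundedOrder L] {φ : L → D}
    (hφ : Monotone φ) (hbot : φ ⊥ = ⊥) (htop : φ ⊤ = ⊤) (d : Fin m → L) (t : BLatTerm m) :
    t.eval (φ ∘ d) = φ (t.eval d) := by
  induction t with
  | var i => rfl
  | bot => exact hbot.symm
  | top => exact htop.symm
  | inf s t hs ht => rw [eval, eval, hs, ht, ← hφ.map_inf]
  | sup s t hs ht => rw [eval, eval, hs, ht, ← hφ.map_sup]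

section Chain

variable {L : Type} [LinearOrder L] [BoundedOrder L]

def supBelow (d : Fin m → L) (x : L) : BLatTerm m :=
  if x = ⊤ then .top else listSup ((List.finRange m).filter fun l => d l ≤ x ∧ d l ≠ ⊥)

lemma eval_supBelow_top (d : Fin m → L) (e : Fin m → D) : (supBelow d ⊤).eval e = ⊤ := by
  simp [supBelow, eval]

lemma eval_supBelow_of_ne_top (d : Fin m → L) (e : Fin m → D) {x : L} (hx : x ≠ ⊤) :
    (supBelow d x).eval e = ({l | d l ≤ x ∧ d l ≠ ⊥} : Finset (Fin m)).sup e := by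
  simp [supBelow, hx, eval_listSup, List.toFinset_filter]

lemma monotone_eval_supBelow (d : Fin m → L) (e : Fin m → D) :
    Monotone fun x => (supBelow d x).eval e := by
  intro x y hxy
  by_cases hy : y = ⊤
  · simp only [hy, eval_supBelow_top, le_top]
  have hx : x ≠ ⊤ := ne_top_of_le_ne_top hy hxy
  simp only [eval_supBelow_of_ne_top d e hx, eval_supBelow_of_ne_top d e hy]
  refine Finset.sup_mono fun l hl => ?_
  simp only [Finset.mem_filter, Finset.mem_univ, true_and] at hl ⊢
  exact ⟨hl.1.trans hxy, hl.2⟩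

lemma eval_supBelow_bot [Nontrivial L] (d : Fin m → L) (e : Fin m → D) :
    (supBelow d ⊥).eval e = ⊥ := by
  simp [eval_supBelow_of_ne_top d e bot_ne_top]

lemma eval_supBelow_apply (d : Fin m → L) (j : Fin m) : (supBelow d (d j)).eval d = d j := by
  by_cases htop : d j = ⊤
  · rw [htop, eval_supBelow_top]
  rw [eval_supBelow_of_ne_top d d htop]
  refine le_antisymm (Finset.sup_le fun l hl => (Finset.mem_filter.mp hl).2.1) ?_
  rcases eq_or_ne (d j) ⊥ with hbot | hbot
  · exact hbot.le.trans bot_le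
  · exact Finset.le_sup (by simp [hbot])

end Chain

end BLatTerm

open BLatTerm in
theorem isFlat_of_linearOrder (L : Type) [LinearOrder L] [BoundedOrder L] [Nontrivial L] :
    IsFlat L := by
  intro n m α β d hαβ
  refine ⟨m, fun j => supBelow d (d j), fun i D _ _ e => ?_, d, eval_supBelow_apply d⟩
  have hφ (t : BLatTerm m) := eval_comp_of_monotone (monotone_eval_supBelow d e)
    (eval_supBelow_bot d e) (eval_supBelow_top d e) d t
  rw [eval_subst_s14, eval_subst_s14]
  exact (hφ (α i)).trans
    ((congrArg (fun x => (supBelow d x).eval e) (hαβ i)).trans (hφ (β i)).symm)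

/-- The real unit interval `[0,1]`, with `min`, `max`, `0`, `1`, is a flat distributive
lattice; in particular it has the disjunction property `max a b = 1 → a = 1 ∨ b = 1`. -/
theorem unitInterval_isFlat :
    IsFlat unitInterval ∧
    (∀ a b : unitInterval, a ⊔ b = ⊤ → a = ⊤ ∨ b = ⊤) :=
  ⟨isFlat_of_linearOrder unitInterval, fun _ _ h => (max_eq_iff.mp h).imp And.left And.left⟩
end
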